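/- arXiv:1712.01503 — 6 statements merged into one kernel-verified Lean document; each statement's English description precedes it below -/
import Mathlib

section
/- For any graph G with a non-empty edge set, the spectral radius of the adjacency matrix satisfies μ(G) ≥ min{√(d(u)·d(v)) : uv ∈ E(G)}. -/
open Finset

/-- Spectral radius (largest eigenvalue) of the adjacency matrix of `G`. -/
noncomputable def specRad {V : Type*} [Fintype V] [DecidableEq V] (G : SimpleGraph V) : ℝ :=
  letI : DecidableRel G.Adj := Classical.decRel _
  sSup (spectrum ℝ (G.adjMatrix ℝ))

/-- Degree of a vertex, via `Set.ncard` (no decidability needed). -/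
noncomputable def deg {V : Type*} (G : SimpleGraph V) (v : V) : ℕ :=
  (G.neighborSet v).ncard

/-- One step of the `k`-closure: add one edge between nonadjacent vertices
with degree sum at least `k`. -/
def ClosureStep {V : Type*} (k : ℕ) (G H : SimpleGraph V) : Prop :=
  ∃ u v : V, u ≠ v ∧ ¬ G.Adj u v ∧ k ≤ deg G u + deg G v ∧
    H = G ⊔ SimpleGraph.fromEdgeSet {s(u, v)}

/-- No pair of nonadjacent vertices has degree sum at least `k`. -/
def IsKClosed {V : Type*} (k : ℕ) (H : SimpleGraph V) : Prop :=
  ∀ u v : V, u ≠ v → ¬ H.Adj u v → deg H u + deg H v < k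

/-- `H` is a `k`-closure of `G`. -/
def IsKClosure {V : Type*} (k : ℕ) (G H : SimpleGraph V) : Prop :=
  Relation.ReflTransGen (ClosureStep k) G H ∧ IsKClosed k H

/-- `G` is `s`-connected: more than `s` vertices, and deleting fewer than `s`
vertices leaves a connected graph. -/
def SConnected {V : Type*} [Fintype V] (s : ℕ) (G : SimpleGraph V) : Prop :=
  s < Fintype.card V ∧
    ∀ S : Finset V, S.card < s → (G.induce ((↑S : Set V)ᶜ)).Connected

/-- `G` is `s`-edge-connected: at least two vertices, and deleting fewer than
`s` edges leaves a connected graph. -/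
def SEdgeConnected {V : Type*} [Fintype V] (s : ℕ) (G : SimpleGraph V) : Prop :=
  2 ≤ Fintype.card V ∧
    ∀ F : Finset (Sym2 V), ↑F ⊆ G.edgeSet → F.card < s →
      (G.deleteEdges ↑F).Connected

/-- `G` is `β`-deficient: some matching leaves at most `β` vertices unmatched. -/
def BetaDeficient {V : Type*} [Fintype V] (β : ℕ) (G : SimpleGraph V) : Prop :=
  ∃ M : G.Subgraph, M.IsMatching ∧ Fintype.card V ≤ M.verts.ncard + β

/-- `G` is `s`-path-coverable: the vertices are covered by at most `s`
vertex-disjoint paths. -/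
def SPathCoverable {V : Type*} (s : ℕ) (G : SimpleGraph V) : Prop :=
  ∃ m : ℕ, m ≤ s ∧ ∃ (a b : Fin m → V) (p : ∀ i, G.Walk (a i) (b i)),
    (∀ i, (p i).IsPath) ∧
    (∀ i j, i ≠ j → ∀ x, x ∈ (p i).support → x ∉ (p j).support) ∧
    (∀ x : V, ∃ i, x ∈ (p i).support)

/-- `G` is `s`-Hamiltonian: deleting any at most `s` vertices leaves a
Hamiltonian graph. -/
def SHamiltonian {V : Type*} [Fintype V] [DecidableEq V] (s : ℕ) (G : SimpleGraph V) : Prop :=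
  ∀ X : Finset V, X.card ≤ s → (G.induce ((↑X : Set V)ᶜ)).IsHamiltonian

/-- `G` is `s`-edge-Hamiltonian: any collection of vertex-disjoint paths with
at most `s` edges altogether is contained in a Hamiltonian cycle. -/
def SEdgeHamiltonian {V : Type*} [Fintype V] [DecidableEq V] (s : ℕ) (G : SimpleGraph V) : Prop :=
  ∀ (m : ℕ) (a b : Fin m → V) (p : ∀ i, G.Walk (a i) (b i)),
    (∀ i, (p i).IsPath) →
    (∀ i j, i ≠ j → ∀ x, x ∈ (p i).support → x ∉ (p j).support) →
    (∑ i, (p i).length) ≤ s →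
    ∃ (c : V) (w : G.Walk c c), w.IsHamiltonianCycle ∧
      ∀ i, ∀ e ∈ (p i).edges, e ∈ w.edges

/-- `G` is semi-regular bipartite: all edges go between `X` and its complement,
vertices in `X` all have degree `dX`, vertices outside `X` all have degree `dY`. -/
def IsSemiregularBipartite {V : Type*} (G : SimpleGraph V) : Prop :=
  ∃ (X : Set V) (dX dY : ℕ),
    (∀ u v, G.Adj u v → (u ∈ X ↔ v ∉ X)) ∧
    (∀ u ∈ X, deg G u = dX) ∧
    (∀ u ∉ X, deg G u = dY)

/-- `G ∈ EP_n`: `G = Ḡ₁ ∨ G₂` with `G₁` an `r`-regular graph of order `n-k+r`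
and `G₂` a spanning subgraph of `K_{k-r}` (equivalently: outside a set `S` of
`k-r` vertices the induced graph is `(n-k-1)`-regular, and all pairs between
`S` and its complement are joined). -/
def MemEP {V : Type*} [Fintype V] (n k : ℕ) (G : SimpleGraph V) : Prop :=
  ∃ (r : ℕ) (S : Finset V), r ≤ k ∧ S.card = k - r ∧
    (∀ a ∉ S, ∀ b ∈ S, G.Adj a b) ∧
    (∀ a ∉ S, ((G.neighborSet a) \ (↑S : Set V)).ncard = n - k - 1)

/-- `G ∈ EC_n`: `G = Ḡ₁ ∨ G₂` where `G₁ = (X,Y)` is semi-regular bipartite of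
order `n-s+1+r`, with degrees `k-s+2` on `X` and `n-k-1` on `Y`, and `G₂` is an
arbitrary graph on `s-1-r ≥ 0` vertices. -/
def MemEC {V : Type*} [Fintype V] [DecidableEq V] (n k s : ℕ) (G : SimpleGraph V) : Prop :=
  ∃ (r : ℕ) (X Y S : Finset V) (G₁ : SimpleGraph V),
    Disjoint X Y ∧ Disjoint X S ∧ Disjoint Y S ∧ X ∪ Y ∪ S = Finset.univ ∧
    ((S.card : ℤ) = (s : ℤ) - 1 - r) ∧
    ((X.card : ℤ) + Y.card = (n : ℤ) - s + 1 + r) ∧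
    (∀ u v, G₁.Adj u v → (u ∈ X ∧ v ∈ Y) ∨ (u ∈ Y ∧ v ∈ X)) ∧
    (∀ u ∈ X, ((deg G₁ u : ℤ) = (k : ℤ) - s + 2)) ∧
    (∀ v ∈ Y, ((deg G₁ v : ℤ) = (n : ℤ) - k - 1)) ∧
    (∀ a, a ∈ X ∪ Y → ∀ b ∈ S, G.Adj a b) ∧
    (∀ a ∈ X ∪ Y, ∀ b ∈ X ∪ Y, (G.Adj a b ↔ a ≠ b ∧ ¬ G₁.Adj a b))

/-- `G ∈ ES_n`: `G = Ḡ₁ ∨ G₂` where `G₁ = (X,Y)` is semi-regular bipartite of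
order `n-s-1+r`, with degrees `k-s` on `X` and `n-k-1` on `Y`, and `G₂` is an
arbitrary graph on `s+1-r ≥ 0` vertices. -/
def MemES {V : Type*} [Fintype V] [DecidableEq V] (n k s : ℕ) (G : SimpleGraph V) : Prop :=
  ∃ (r : ℕ) (X Y S : Finset V) (G₁ : SimpleGraph V),
    Disjoint X Y ∧ Disjoint X S ∧ Disjoint Y S ∧ X ∪ Y ∪ S = Finset.univ ∧
    ((S.card : ℤ) = (s : ℤ) + 1 - r) ∧
    ((X.card : ℤ) + Y.card = (n : ℤ) - s - 1 + r) ∧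
    (∀ u v, G₁.Adj u v → (u ∈ X ∧ v ∈ Y) ∨ (u ∈ Y ∧ v ∈ X)) ∧
    (∀ u ∈ X, ((deg G₁ u : ℤ) = (k : ℤ) - s)) ∧
    (∀ v ∈ Y, ((deg G₁ v : ℤ) = (n : ℤ) - k - 1)) ∧
    (∀ a, a ∈ X ∪ Y → ∀ b ∈ S, G.Adj a b) ∧
    (∀ a ∈ X ∪ Y, ∀ b ∈ X ∪ Y, (G.Adj a b ↔ a ≠ b ∧ ¬ G₁.Adj a b))

/-- `G = K_{k+1} + K_{n-k-1}`: the disjoint union of a clique on `k+1` vertices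
and a clique on the remaining vertices. -/
def IsCliquePlusClique {V : Type*} [Fintype V] (k : ℕ) (G : SimpleGraph V) : Prop :=
  ∃ S : Finset V, S.card = k + 1 ∧
    (∀ a ∈ S, ∀ b ∈ S, a ≠ b → G.Adj a b) ∧
    (∀ a ∉ S, ∀ b ∉ S, a ≠ b → G.Adj a b) ∧
    (∀ a ∈ S, ∀ b ∉ S, ¬ G.Adj a b)

/- The test vector x = (√d(v))_v has x ⬝ x = ∑ d(v), while x ⬝ A x = ∑_{u ~ v} √(d(u) d(v)) is at
least the minimum over edges times ∑ d(v). Since A ≤ μ(G) • 1 in the Loewner order, the Rayleigh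
quotient of x is at most μ(G). -/

open Matrix

theorem Matrix.IsHermitian.dotProduct_mulVec_le_sSup_spectrum {n : Type*} [Fintype n]
    [DecidableEq n] {A : Matrix n n ℝ} (hA : A.IsHermitian) (x : n → ℝ) :
    x ⬝ᵥ A *ᵥ x ≤ sSup (spectrum ℝ A) * (x ⬝ᵥ x) := by
  have hB : (algebraMap ℝ (Matrix n n ℝ) (sSup (spectrum ℝ A)) - A).PosSemidef := by
    refine posSemidef_iff_isHermitian_and_spectrum_nonneg.2 ⟨(isHermitian_diagonal _).sub hA, ?_⟩
    rw [← spectrum.singleton_sub_eq]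
    rintro _ ⟨_, rfl, r, hr, rfl⟩
    exact sub_nonneg.2 (le_csSup finite_real_spectrum.bddAbove hr)
  have := hB.dotProduct_mulVec_nonneg x
  rw [Algebra.algebraMap_eq_smul_one, sub_mulVec, smul_mulVec, one_mulVec, dotProduct_sub,
    dotProduct_smul, star_trivial, smul_eq_mul] at this
  linarith

namespace SimpleGraph

variable {V : Type*} [Fintype V] (G : SimpleGraph V) [DecidableRel G.Adj]

theorem deg_eq_degree (v : V) : deg G v = G.degree v := by
  rw [deg, ← card_neighborFinset_eq_degree, neighborFinset, Set.ncard_eq_toFinset_card']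

theorem mul_sum_degree_le_dotProduct_adjMatrix_mulVec {c : ℝ} {f : V → ℝ}
    (hc : ∀ u v, G.Adj u v → c ≤ f u * f v) :
    c * ∑ u, (G.degree u : ℝ) ≤ f ⬝ᵥ G.adjMatrix ℝ *ᵥ f := by
  simp_rw [dotProduct_mulVec_adjMatrix, degree_eq_sum_if_adj, mul_sum, mul_ite, mul_one, mul_zero]
  gcongr with u _ v _
  split_ifs with huv
  exacts [hc u v huv, le_rfl]

theorem dotProduct_sqrt_degree_self :
    (fun v ↦ √(G.degree v : ℝ)) ⬝ᵥ (fun v ↦ √(G.degree v : ℝ)) = ∑ v, (G.degree v : ℝ) :=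
  sum_congr rfl fun _ _ ↦ Real.mul_self_sqrt (Nat.cast_nonneg _)

end SimpleGraph

/-- For any graph with a non-empty edge set, the spectral radius is at least
`min{√(d(u)·d(v)) : uv ∈ E(G)}`. -/
theorem stmt_0 {V : Type*} [Fintype V] [DecidableEq V] (G : SimpleGraph V)
    (h : G.edgeSet.Nonempty) :
    sInf {x : ℝ | ∃ u v : V, G.Adj u v ∧ x = Real.sqrt ((deg G u : ℝ) * deg G v)} ≤
      specRad G := by
  let : DecidableRel G.Adj := Classical.decRel _ -- the instance built into `specRad`
  obtain ⟨⟨u₀, v₀⟩, he⟩ := h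
  set c := sInf {x : ℝ | ∃ u v : V, G.Adj u v ∧ x = Real.sqrt ((deg G u : ℝ) * deg G v)}
  have hc : ∀ u v, G.Adj u v → c ≤ √(G.degree u : ℝ) * √(G.degree v : ℝ) := fun u v huv ↦ by
    rw [← Real.sqrt_mul (Nat.cast_nonneg _), ← G.deg_eq_degree, ← G.deg_eq_degree]
    exact csInf_le ⟨0, by rintro _ ⟨u, v, _, rfl⟩; positivity⟩ ⟨u, v, huv, rfl⟩
  have hsum : 0 < ∑ v, (G.degree v : ℝ) :=
    sum_pos' (fun _ _ ↦ Nat.cast_nonneg _)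
      ⟨u₀, mem_univ _, Nat.cast_pos.2 (G.degree_pos_iff_exists_adj u₀ |>.2 ⟨v₀, he⟩)⟩
  have hquad := (G.mul_sum_degree_le_dotProduct_adjMatrix_mulVec hc).trans
    ((G.isHermitian_adjMatrix ℝ).dotProduct_mulVec_le_sSup_spectrum _)
  rw [G.dotProduct_sqrt_degree_self] at hquad
  exact le_of_mul_le_mul_right hquad hsum
end

section
/- The k-closure of a graph G is unique: any two graphs obtained from G by repeatedly joining nonadjacent vertex pairs with degree sum at least k, until no such pair remains, are equal. -/
open Finset

/-!
Degrees only grow along closure steps, so a pair that is joined at some step of a `k`-closure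
sequence from `G` has degree sum at least `k` in every supergraph of the current graph; in a
`k`-closed supergraph it must therefore already be adjacent. Hence every `k`-closure of `G` lies
below every `k`-closed graph containing `G`, and two `k`-closures lie below each other.
-/

section KClosure

variable {V : Type*} {k : ℕ} {G G' H : SimpleGraph V}

lemma deg_mono [Finite V] (h : G ≤ H) (v : V) : deg G v ≤ deg H v :=
  Set.ncard_le_ncard (fun _ hu => h hu) (Set.toFinite _)

lemma ClosureStep.le (hs : ClosureStep k G G') : G ≤ G' := by
  obtain ⟨u, v, -, -, -, rfl⟩ := hs
  exact le_sup_left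

lemma le_of_reflTransGen_closureStep (h : Relation.ReflTransGen (ClosureStep k) G G') :
    G ≤ G' := by
  induction h with
  | refl => exact le_rfl
  | tail _ hs ih => exact ih.trans hs.le

lemma ClosureStep.le_of_isKClosed [Finite V] (hs : ClosureStep k G G') (hG : G ≤ H)
    (hH : IsKClosed k H) : G' ≤ H := by
  obtain ⟨u, v, huv, -, hsum, rfl⟩ := hs
  have hadj : H.Adj u v := by
    by_contra hnadj
    have := hH u v huv hnadj
    have := deg_mono hG u
    have := deg_mono hG v
    omega
  exact sup_le hG ((H.edge_le_iff).2 (Or.inr hadj))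

lemma le_of_reflTransGen_closureStep_of_isKClosed [Finite V]
    (h : Relation.ReflTransGen (ClosureStep k) G G') (hG : G ≤ H) (hH : IsKClosed k H) :
    G' ≤ H := by
  induction h with
  | refl => exact hG
  | tail _ hs ih => exact hs.le_of_isKClosed ih hH

end KClosure

/-- The `k`-closure of a graph is unique. -/
theorem stmt_3 {V : Type*} [Fintype V] (k : ℕ) (G H₁ H₂ : SimpleGraph V)
    (h₁ : IsKClosure k G H₁) (h₂ : IsKClosure k G H₂) : H₁ = H₂ :=
  le_antisymm
    (le_of_reflTransGen_closureStep_of_isKClosed h₁.1 (le_of_reflTransGen_closureStep h₂.1) h₂.2)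
    (le_of_reflTransGen_closureStep_of_isKClosed h₂.1 (le_of_reflTransGen_closureStep h₁.1) h₁.2)
end

section
/- Let G be a graph of order n and H a graph obtained from G by adding an edge uv where u, v are nonadjacent in G and d_G(u) + d_G(v) ≥ n + s − 2. Then G is s-connected if and only if H is s-connected. -/
open Finset

/-!
Adding `uv` can only help, so `s`-connectivity passes from `G` to `H = G + uv`. Conversely, let
`|S| < s` and suppose `H - S` is connected but `G - S` is not. Then `u` and `v` lie in different
components of `G - S`, so they are nonadjacent and have no common neighbour outside `S`; their
neighbourhoods outside `S` are therefore disjoint subsets of `V \ (S ∪ {u, v})`, whence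
`d(u) + d(v) ≤ (n - |S| - 2) + 2|S| = n + |S| - 2 < n + s - 2`.
-/

namespace SimpleGraph

variable {V : Type*} {G H : SimpleGraph V}

lemma Reachable.of_adj_imp_reachable (h : ∀ a b, H.Adj a b → G.Reachable a b) {a b : V}
    (hab : H.Reachable a b) : G.Reachable a b := by
  simp only [reachable_iff_reflTransGen] at h hab ⊢
  exact Relation.reflTransGen_closed h _ _ hab

lemma preconnected_induce_of_sup_edge {T : Set V} {u v : V}
    (huv : ∀ (hu : u ∈ T) (hv : v ∈ T), (G.induce T).Reachable ⟨u, hu⟩ ⟨v, hv⟩)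
    (h : ((G ⊔ edge u v).induce T).Preconnected) : (G.induce T).Preconnected := by
  intro a b
  refine (h a b).of_adj_imp_reachable ?_
  rintro ⟨x, hx⟩ ⟨y, hy⟩ (hxy | hxy)
  · exact Adj.reachable hxy
  · obtain ⟨⟨rfl, rfl⟩ | ⟨rfl, rfl⟩, -⟩ := (edge_adj ..).1 hxy
    · exact huv hx hy
    · exact (huv hy hx).symm

lemma deg_add_deg_add_two_le [Finite V] {S : Finset V} {u v : V} (hu : u ∉ S) (hv : v ∉ S)
    (huv : u ≠ v) (hadj : ¬G.Adj u v)
    (hdisj : Disjoint (G.neighborSet u \ S) (G.neighborSet v \ S)) :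
    deg G u + deg G v + 2 ≤ Nat.card V + #S := by
  have hdeg (w : V) : deg G w ≤ (G.neighborSet w \ S).ncard + #S := by
    calc deg G w ≤ (G.neighborSet w \ S ∪ S).ncard := Set.ncard_le_ncard (by simp)
      _ ≤ _ := by simpa using Set.ncard_union_le (G.neighborSet w \ S) S
  have hsub : G.neighborSet u \ S ∪ G.neighborSet v \ S ⊆ (↑S ∪ {u, v})ᶜ := by
    rintro w (⟨hw, hwS⟩ | ⟨hw, hwS⟩) <;> simp only [Set.mem_compl_iff, Set.mem_union,
      Set.mem_insert_iff, Set.mem_singleton_iff, not_or]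
    · exact ⟨hwS, (G.ne_of_adj hw).symm, by rintro rfl; exact hadj hw⟩
    · exact ⟨hwS, by rintro rfl; exact hadj hw.symm, (G.ne_of_adj hw).symm⟩
  have hS : (↑S ∪ {u, v} : Set V).ncard = #S + 2 := by
    rw [Set.ncard_union_eq (by simp [hu, hv]), Set.ncard_coe_finset, Set.ncard_pair huv]
  have hout := Set.ncard_le_ncard hsub
  rw [Set.ncard_union_eq hdisj] at hout
  have hcompl := Set.ncard_add_ncard_compl (↑S ∪ {u, v} : Set V)
  linarith [hdeg u, hdeg v]

lemma deg_add_deg_add_two_le_of_not_reachable [Finite V] {S : Finset V} {u v : V}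
    (hu : u ∈ (↑S : Set V)ᶜ) (hv : v ∈ (↑S : Set V)ᶜ)
    (h : ¬(G.induce (↑S)ᶜ).Reachable ⟨u, hu⟩ ⟨v, hv⟩) :
    deg G u + deg G v + 2 ≤ Nat.card V + #S := by
  refine deg_add_deg_add_two_le hu hv (fun huv => h ?_) (fun hadj => h ?_) ?_
  · subst huv; rfl
  · exact Adj.reachable (G := G.induce _) hadj
  · rw [Set.disjoint_left]
    rintro w ⟨huw, hw⟩ ⟨hvw, -⟩
    have huw' : (G.induce (↑S)ᶜ).Adj ⟨u, hu⟩ ⟨w, hw⟩ := huw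
    have hvw' : (G.induce (↑S)ᶜ).Adj ⟨v, hv⟩ ⟨w, hw⟩ := hvw
    exact h (huw'.reachable.trans hvw'.reachable.symm)

end SimpleGraph

open SimpleGraph

lemma SConnected.mono {V : Type*} [Fintype V] {s : ℕ} {G H : SimpleGraph V} (hGH : G ≤ H)
    (hG : SConnected s G) : SConnected s H :=
  ⟨hG.1, fun S hS => (hG.2 S hS).mono fun _ _ hab => hGH hab⟩

theorem stmt_4_general {V : Type*} [Fintype V] (n s : ℕ) (G : SimpleGraph V)
    (hcard : Fintype.card V = n) (u v : V)
    (hdeg : (n : ℤ) + s - 2 ≤ (deg G u : ℤ) + deg G v) :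
    SConnected s G ↔ SConnected s (G ⊔ SimpleGraph.fromEdgeSet {s(u, v)}) := by
  refine ⟨SConnected.mono le_sup_left, fun ⟨hsV, hH⟩ => ⟨hsV, fun S hS => ?_⟩⟩
  have hHS := hH S hS
  have := hHS.nonempty
  refine ⟨preconnected_induce_of_sup_edge (fun hu hv => ?_) hHS.preconnected⟩
  by_contra hnr
  have hdegS := deg_add_deg_add_two_le_of_not_reachable hu hv hnr
  rw [Nat.card_eq_fintype_card, hcard] at hdegS
  omega

/-- Adding an edge between nonadjacent vertices with degree sum at least
`n + s - 2` preserves `s`-connectivity in both directions. -/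
theorem stmt_4 {V : Type*} [Fintype V] (n s : ℕ) (G : SimpleGraph V)
    (hcard : Fintype.card V = n) (u v : V) (huv : u ≠ v) (hadj : ¬ G.Adj u v)
    (hdeg : (n : ℤ) + s - 2 ≤ (deg G u : ℤ) + deg G v) :
    SConnected s G ↔ SConnected s (G ⊔ SimpleGraph.fromEdgeSet {s(u, v)}) :=
  stmt_4_general n s G hcard u v hdeg
end

section
/- Let G be a graph of order n. Then G is s-Hamiltonian if and only if its (n+s)-closure C_{n+s}(G) is s-Hamiltonian. -/
open Finset

/-!
Bondy–Chvátal: if `u`, `v` are nonadjacent with `deg u + deg v ≥ |V|` and `G + uv` is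
Hamiltonian, then so is `G`. A Hamiltonian cycle of `G + uv` through `uv` leaves a Hamiltonian
path `u = x₀, …, x_{n-1} = v` in `G`; by pigeonhole some `i` has `u ~ xᵢ` and `v ~ x_{i-1}`,
and `u xᵢ … v x_{i-1} … x₁ u` is a Hamiltonian cycle of `G`. Deleting a set `X` of at most `s`
vertices lowers each degree by at most `s`, so an edge added in an `(n + s)`-closure step still
satisfies this degree condition in `G - X`. Hence every closure step preserves `s`-Hamiltonicity
in both directions.
-/

namespace SimpleGraph.Walk

variable {V : Type*} {G : SimpleGraph V} {u v : V}

lemma IsCycle.eq_snd_or_eq_penultimate_of_mem_edges {c : G.Walk u u} (hc : c.IsCycle)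
    (h : s(u, v) ∈ c.edges) : v = c.snd ∨ v = c.penultimate := by
  rw [← cons_tail_eq c hc.not_nil, edges_cons, List.mem_cons] at h
  rcases h with h | h
  · exact .inl (Sym2.congr_right.mp h)
  · right
    rw [hc.isPath_tail.eq_penultimate_of_mem_edges h, penultimate, tail, drop_getVert,
      drop_length]
    have := hc.three_le_length
    congr 1
    omega

variable [DecidableEq V]

lemma IsHamiltonian.reverse {p : G.Walk u v} (hp : p.IsHamiltonian) : p.reverse.IsHamiltonian :=
  fun a => by simpa [support_reverse] using hp a

lemma IsHamiltonian.transfer {H : SimpleGraph V} {p : G.Walk u v} (hp : p.IsHamiltonian)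
    (hH : ∀ e ∈ p.edges, e ∈ H.edgeSet) : (p.transfer H hH).IsHamiltonian :=
  fun a => by rw [support_transfer]; exact hp a

variable [Fintype V]

lemma IsHamiltonianCycle.reverse {c : G.Walk u u} (hc : c.IsHamiltonianCycle) :
    c.reverse.IsHamiltonianCycle := by
  rw [isHamiltonianCycle_iff_isCycle_and_length_eq] at hc ⊢
  exact ⟨hc.1.reverse, by rw [length_reverse, hc.2]⟩

lemma IsHamiltonianCycle.transfer {H : SimpleGraph V} {c : G.Walk u u}
    (hc : c.IsHamiltonianCycle) (hH : ∀ e ∈ c.edges, e ∈ H.edgeSet) :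
    (c.transfer H hH).IsHamiltonianCycle := by
  rw [isHamiltonianCycle_iff_isCycle_and_length_eq] at hc ⊢
  exact ⟨hc.1.transfer hH, by rw [length_transfer, hc.2]⟩

lemma IsHamiltonianCycle.exists_isHamiltonian_of_mem_edges {c : G.Walk u u}
    (hc : c.IsHamiltonianCycle) (h : s(u, v) ∈ c.edges) :
    ∃ p : G.Walk u v, p.IsHamiltonian ∧ s(u, v) ∉ p.edges := by
  wlog hv : v = c.snd generalizing c
  · rcases hc.isCycle.eq_snd_or_eq_penultimate_of_mem_edges h with h' | h'
    · exact this hc h h'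
    · exact this hc.reverse (by simpa using h) (by rw [snd_reverse]; exact h')
  subst hv
  have hcons := (cons_isCycle_iff _ _).mp ((cons_tail_eq c hc.not_nil) ▸ hc.isCycle)
  exact ⟨c.tail.reverse, hc.isHamiltonian_tail.reverse, by simpa [Sym2.eq_swap] using hcons.2⟩

lemma IsHamiltonian.ncard_eq_card_filter_range {p : G.Walk u v} (hp : p.IsHamiltonian)
    (s : Set V) [DecidablePred (· ∈ s)] :
    s.ncard = #{i ∈ range (Fintype.card V) | p.getVert i ∈ s} := by
  have hlen := hp.length_eq
  have hpos : 0 < Fintype.card V := Fintype.card_pos_iff.mpr ⟨u⟩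
  rw [← Set.ncard_coe_finset]
  refine (Set.ncard_congr (fun i _ => p.getVert i) (fun i hi => (by simpa using hi : _ ∧ _).2)
    (fun i j hi hj hij => ?_) (fun x hx => ?_)).symm
  · simp only [coe_filter, mem_range, Set.mem_ofPred_eq] at hi hj
    exact hp.isPath.getVert_injOn (by simp; omega) (by simp; omega) hij
  · obtain ⟨i, rfl⟩ := hp.getVert_surjective x
    have hmin : p.getVert (min i p.length) = p.getVert i := by
      rcases le_total i p.length with h | h
      · rw [min_eq_left h]
      · rw [min_eq_right h, getVert_of_length_le _ h, getVert_length]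
    refine ⟨min i p.length, ?_, hmin⟩
    simp only [coe_filter, mem_range]
    exact ⟨by omega, hmin ▸ hx⟩

/-- The cycle `u xᵢ xᵢ₊₁ … v x_{i-1} x_{i-2} … x₁ u`, where `xⱼ = p.getVert j`. -/
lemma IsHamiltonian.isHamiltonianCycle_cons_drop_append {p : G.Walk u v} (hp : p.IsHamiltonian)
    {i : ℕ} (hi₁ : 1 ≤ i) (hi : i ≤ p.length) (h3 : 3 ≤ Fintype.card V)
    (hu : G.Adj u (p.getVert i)) (hv : G.Adj v (p.getVert (i - 1))) :
    (cons hu ((p.drop i).append (cons hv (p.take (i - 1)).reverse))).IsHamiltonianCycle := by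
  have hlen := hp.length_eq
  rw [isHamiltonianCycle_iff_isCycle_and_length_eq, isCycle_iff_isPath_tail_and_le_length]
  simp only [length_cons, length_append, drop_length, length_reverse, take_length]
  refine ⟨⟨IsPath.mk' ?_, by omega⟩, by omega⟩
  rw [support_tail_of_not_nil _ not_nil_cons, support_cons, List.tail_cons, support_append,
    support_cons, List.tail_cons, support_reverse, support_take,
    drop_support_eq_support_drop_min, min_eq_left hi, Nat.sub_add_cancel hi₁]
  have hperm : (p.support.drop i ++ (p.support.take i).reverse).Perm p.support :=
    ((List.reverse_perm _).append_left _).trans <|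
      List.perm_append_comm.trans (by rw [List.take_append_drop])
  exact hperm.nodup_iff.mpr hp.isPath.support_nodup

lemma IsHamiltonian.exists_adj_getVert_and_adj_getVert_sub_one {p : G.Walk u v}
    (hp : p.IsHamiltonian) (hdeg : Fintype.card V ≤ deg G u + deg G v) :
    ∃ i ∈ Ico 1 (Fintype.card V), G.Adj u (p.getVert i) ∧ G.Adj v (p.getVert (i - 1)) := by
  classical
  set n := Fintype.card V
  have hlen : p.length = n - 1 := hp.length_eq
  set I := {i ∈ range n | G.Adj u (p.getVert i)}
  set J := {i ∈ range n | G.Adj v (p.getVert i)}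
  have hI : I ⊆ Ico 1 n := fun i hi => by
    rw [mem_filter, mem_range] at hi
    have : i ≠ 0 := by rintro rfl; exact G.irrefl (v := u) (by simpa using hi.2)
    rw [mem_Ico]; omega
  have hJ : J.map (addRightEmbedding 1) ⊆ Ico 1 n := fun i hi => by
    obtain ⟨j, hj, rfl⟩ := mem_map.mp hi
    rw [mem_filter, mem_range] at hj
    have : j ≠ p.length := by rintro rfl; exact G.irrefl (v := v) (by simpa using hj.2)
    rw [mem_Ico, addRightEmbedding_apply]; omega
  have hcard : #(Ico 1 n) < #I + #(J.map (addRightEmbedding 1)) := by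
    have hIu : deg G u = #I := hp.ncard_eq_card_filter_range _
    have hJv : deg G v = #J := hp.ncard_eq_card_filter_range _
    rw [card_map, Nat.card_Ico, ← hIu, ← hJv]
    have : 0 < n := Fintype.card_pos_iff.mpr ⟨u⟩
    omega
  obtain ⟨i, hi⟩ := inter_nonempty_of_card_lt_card_add_card hI hJ hcard
  rw [mem_inter] at hi
  obtain ⟨j, hj, rfl⟩ := mem_map.mp hi.2
  exact ⟨j + 1, hI hi.1, (mem_filter.mp hi.1).2, by simpa using (mem_filter.mp hj).2⟩

theorem IsHamiltonian.exists_isHamiltonianCycle_of_le_deg_add_deg {p : G.Walk u v}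
    (hp : p.IsHamiltonian) (huv : ¬G.Adj u v) (hdeg : Fintype.card V ≤ deg G u + deg G v) :
    ∃ c : G.Walk u u, c.IsHamiltonianCycle := by
  obtain ⟨i, hi, hui, hvi⟩ := hp.exists_adj_getVert_and_adj_getVert_sub_one hdeg
  have hlen := hp.length_eq
  rw [mem_Ico] at hi
  have h3 : 3 ≤ Fintype.card V := by
    by_contra h3
    have : i = p.length := by omega
    exact huv (by rwa [this, getVert_length] at hui)
  exact ⟨_, hp.isHamiltonianCycle_cons_drop_append hi.1 (by omega) h3 hui hvi⟩

end SimpleGraph.Walk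

namespace SimpleGraph

variable {V : Type*}

lemma deg_le_deg_induce_add_ncard_compl [Finite V] (G : SimpleGraph V) (s : Set V) (x : s) :
    deg G x ≤ deg (G.induce s) x + sᶜ.ncard :=
  calc deg G x ≤ (G.neighborSet x \ sᶜ).ncard + sᶜ.ncard :=
        Set.ncard_le_ncard_sdiff_add_ncard _ _ (Set.toFinite _)
    _ = deg (G.induce s) x + sᶜ.ncard := by
        rw [deg, neighborSet_induce, ← Set.ncard_image_of_injective _ Subtype.val_injective,
          Subtype.image_preimage_coe, Set.sdiff_compl, Set.inter_comm]

theorem IsHamiltonian.of_sup_edge [Fintype V] [DecidableEq V] {G : SimpleGraph V} {u v : V}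
    (hG : (G ⊔ edge u v).IsHamiltonian) (huv : ¬G.Adj u v)
    (hdeg : Fintype.card V ≤ deg G u + deg G v) : G.IsHamiltonian := by
  intro hV
  have : Nontrivial V :=
    Fintype.one_lt_card_iff_nontrivial.mp (by have := Fintype.card_pos_iff.mpr ⟨u⟩; omega)
  obtain ⟨c, hc⟩ := hG.exists_isHamiltonianCycle u
  have hG : ∀ e ∈ (G ⊔ edge u v).edgeSet, e ≠ s(u, v) → e ∈ G.edgeSet := fun e he hne =>
    (edgeSet_sup _ _ ▸ he).resolve_right fun h => hne (edgeSet_edge_subset h)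
  by_cases huvc : s(u, v) ∈ c.edges
  · obtain ⟨p, hp, hpe⟩ := hc.exists_isHamiltonian_of_mem_edges huvc
    have hpG : ∀ e ∈ p.edges, e ∈ G.edgeSet := fun e he =>
      hG e (p.edges_subset_edgeSet he) (by rintro rfl; exact hpe he)
    exact ⟨u, (hp.transfer hpG).exists_isHamiltonianCycle_of_le_deg_add_deg huv hdeg⟩
  · exact ⟨u, _, hc.transfer fun e he =>
      hG e (c.edges_subset_edgeSet he) (by rintro rfl; exact huvc he)⟩

end SimpleGraph

section SHamiltonian

open SimpleGraph

variable {V : Type*} [Fintype V] [DecidableEq V] {s : ℕ} {G H : SimpleGraph V}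

lemma SHamiltonian.mono (hGH : G ≤ H) (hG : SHamiltonian s G) : SHamiltonian s H :=
  fun X hX => (hG X hX).mono (comap_monotone _ hGH)

lemma SHamiltonian.of_sup_edge {u v : V} (hG : SHamiltonian s (G ⊔ edge u v))
    (huv : ¬G.Adj u v) (hdeg : Fintype.card V + s ≤ deg G u + deg G v) : SHamiltonian s G := by
  intro X hX
  by_cases hS : u ∉ X ∧ v ∉ X
  · let u' : ((↑X : Set V)ᶜ : Set V) := ⟨u, hS.1⟩
    let v' : ((↑X : Set V)ᶜ : Set V) := ⟨v, hS.2⟩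
    refine IsHamiltonian.of_sup_edge (u := u') (v := v') ((hG X hX).mono fun a b hab => ?_) huv ?_
    · simp only [comap_adj, Function.Embedding.coe_subtype, sup_adj, edge_adj] at hab ⊢
      simpa only [u', v', Subtype.ext_iff, ne_eq] using hab
    · have hu : deg G u ≤ _ := deg_le_deg_induce_add_ncard_compl G _ u'
      have hv : deg G v ≤ _ := deg_le_deg_induce_add_ncard_compl G _ v'
      rw [compl_compl, Set.ncard_coe_finset] at hu hv
      have hcard : Fintype.card ((↑X : Set V)ᶜ : Set V) = Fintype.card V - #X := by
        rw [Fintype.card_compl_set]; simp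
      omega
  · refine (hG X hX).mono fun a b hab => ?_
    simp only [comap_adj, Function.Embedding.coe_subtype, sup_adj, edge_adj] at hab
    rcases hab with hab | ⟨(⟨rfl, rfl⟩ | ⟨rfl, rfl⟩), -⟩
    · exact hab
    · exact absurd ⟨a.2, b.2⟩ hS
    · exact absurd ⟨b.2, a.2⟩ hS

lemma ClosureStep.sHamiltonian_iff {G' : SimpleGraph V}
    (h : ClosureStep (Fintype.card V + s) G G') : SHamiltonian s G ↔ SHamiltonian s G' := by
  obtain ⟨u, v, -, huv, hdeg, rfl⟩ := h
  exact ⟨fun hG => hG.mono le_sup_left, fun hG => hG.of_sup_edge huv hdeg⟩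

end SHamiltonian

/-- `G` is `s`-Hamiltonian iff its `(n+s)`-closure is `s`-Hamiltonian. -/
theorem stmt_6 {V : Type*} [Fintype V] [DecidableEq V] (n s : ℕ) (G H : SimpleGraph V)
    (hcard : Fintype.card V = n) (hH : IsKClosure (n + s) G H) :
    SHamiltonian s G ↔ SHamiltonian s H := by
  subst hcard
  obtain ⟨hGH, -⟩ := hH
  induction hGH with
  | refl => rfl
  | tail _ hstep ih => exact ih.trans hstep.sHamiltonian_iff
end

section
/- Let s ≥ 1, k ≥ 1, k − s + 1 ≥ 0, n ≥ 2k + 1, and let G be a connected graph of order n with minimum degree δ(G) ≥ k. If the spectral radius of the complement satisfies μ(Ḡ) ≤ √((k−s+2)(n−k−1)), then G is s-connected, unless G ∈ EP_n or G ∈ EC_n. -/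
open Finset

/-!
If `G` is not `s`-connected, some set `S` of at most `s - 1` vertices separates two nonempty
sides `A` and `B`, and the minimum degree gives `|A|, |B| ≥ k + 1 - |S|`. In `Ḡ` the two sides
span a complete bipartite graph, so testing `‖M x‖² ≤ μ(Ḡ)² ‖x‖²` (with `M` the adjacency matrix
of `Ḡ`, valid because `M ≥ 0` makes `μ(Ḡ)` dominate every `|λᵢ|`) on the indicator vector `x` of
one side gives `|A| |B| ≤ μ(Ḡ)² ≤ (k - s + 2)(n - k - 1)`. As `|A| + |B| = n - |S|`, this forces
`|S| = s - 1` and side sizes `k - s + 2` and `n - k - 1`. The same test vector shows that one more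
edge of `Ḡ` at a vertex of `A ∪ B` would push `μ(Ḡ)²` above `|A| |B|`; hence `Ḡ` meets `A ∪ B`
exactly in `K_{A,B}`, which is the shape of `EC_n`.
-/

namespace Matrix

variable {V : Type*} [Fintype V]

lemma abs_dotProduct_mulVec_le {A : Matrix V V ℝ} (hA : ∀ i j, 0 ≤ A i j) (x : V → ℝ) :
    |x ⬝ᵥ (A *ᵥ x)| ≤ |x| ⬝ᵥ (A *ᵥ |x|) := by
  simp only [dotProduct, mulVec, Pi.abs_apply]
  refine (abs_sum_le_sum_abs _ _).trans (sum_le_sum fun j _ => ?_)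
  rw [abs_mul]
  refine mul_le_mul_of_nonneg_left ((abs_sum_le_sum_abs _ _).trans_eq ?_) (abs_nonneg _)
  exact sum_congr rfl fun l _ => by rw [abs_mul, abs_of_nonneg (hA j l)]

lemma dotProduct_mulVec_of_mem_unitaryGroup [DecidableEq V] {U : Matrix V V ℝ}
    (hU : U ∈ unitaryGroup V ℝ) (a b : V → ℝ) : (U *ᵥ a) ⬝ᵥ (U *ᵥ b) = a ⬝ᵥ b := by
  rw [← vecMul_transpose, ← dotProduct_mulVec, mulVec_mulVec,
    ← conjTranspose_eq_transpose_of_trivial, ← star_eq_conjTranspose,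
    Unitary.star_mul_self_of_mem hU, one_mulVec]

namespace IsHermitian

variable [DecidableEq V] {A : Matrix V V ℝ} (hA : A.IsHermitian)
include hA

lemma exists_eigencoordinates (x : V → ℝ) :
    ∃ y : V → ℝ, x ⬝ᵥ x = ∑ i, y i ^ 2 ∧ x ⬝ᵥ (A *ᵥ x) = ∑ i, hA.eigenvalues i * y i ^ 2 ∧
      (A *ᵥ x) ⬝ᵥ (A *ᵥ x) = ∑ i, hA.eigenvalues i ^ 2 * y i ^ 2 := by
  set U : Matrix V V ℝ := (hA.eigenvectorUnitary : Matrix V V ℝ)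
  have hU : U ∈ unitaryGroup V ℝ := hA.eigenvectorUnitary.2
  set y := star U *ᵥ x
  have hx : x = U *ᵥ y := by rw [mulVec_mulVec, Unitary.mul_star_self_of_mem hU, one_mulVec]
  have hAx : A *ᵥ x = U *ᵥ (diagonal hA.eigenvalues *ᵥ y) := by
    conv_lhs => rw [hA.spectral_theorem, Unitary.conjStarAlgAut_apply]
    rw [← mulVec_mulVec, ← mulVec_mulVec]
    rfl
  refine ⟨y, ?_, ?_, ?_⟩
  · rw [hx, dotProduct_mulVec_of_mem_unitaryGroup hU]
    simp [dotProduct, sq]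
  · rw [hAx, hx, dotProduct_mulVec_of_mem_unitaryGroup hU]
    simp only [dotProduct, mulVec_diagonal]
    exact sum_congr rfl fun i _ => by ring
  · rw [hAx, dotProduct_mulVec_of_mem_unitaryGroup hU]
    simp only [dotProduct, mulVec_diagonal]
    exact sum_congr rfl fun i _ => by ring

lemma dotProduct_mulVec_le {μ : ℝ} (hμ : ∀ i, hA.eigenvalues i ≤ μ) (x : V → ℝ) :
    x ⬝ᵥ (A *ᵥ x) ≤ μ * (x ⬝ᵥ x) := by
  obtain ⟨y, hx, hAx, -⟩ := hA.exists_eigencoordinates x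
  rw [hx, hAx, mul_sum]
  exact sum_le_sum fun i _ => mul_le_mul_of_nonneg_right (hμ i) (sq_nonneg _)

lemma mulVec_dotProduct_mulVec_le {μ : ℝ} (hμ : ∀ i, |hA.eigenvalues i| ≤ μ) (x : V → ℝ) :
    (A *ᵥ x) ⬝ᵥ (A *ᵥ x) ≤ μ ^ 2 * (x ⬝ᵥ x) := by
  obtain ⟨y, hx, -, hAx⟩ := hA.exists_eigencoordinates x
  rw [hx, hAx, mul_sum]
  refine sum_le_sum fun i _ => mul_le_mul_of_nonneg_right ?_ (sq_nonneg _)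
  exact sq_le_sq' (abs_le.1 (hμ i)).1 (abs_le.1 (hμ i)).2

lemma abs_eigenvalues_le {μ : ℝ} (hnonneg : ∀ i j, 0 ≤ A i j) (hμ : ∀ i, hA.eigenvalues i ≤ μ)
    (i : V) : |hA.eigenvalues i| ≤ μ := by
  set v : V → ℝ := ⇑(hA.eigenvectorBasis i)
  have hv : v ⬝ᵥ v = 1 := by
    have h := inner_self_eq_one_of_norm_eq_one (𝕜 := ℝ) (hA.eigenvectorBasis.orthonormal.1 i)
    rwa [EuclideanSpace.inner_eq_star_dotProduct, star_trivial] at h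
  have heig : hA.eigenvalues i = v ⬝ᵥ (A *ᵥ v) := by
    simpa using hA.eigenvalues_eq i
  have habs : |v| ⬝ᵥ |v| = 1 := by
    simpa [dotProduct, abs_mul_abs_self] using hv
  calc |hA.eigenvalues i| ≤ |v| ⬝ᵥ (A *ᵥ |v|) := heig ▸ abs_dotProduct_mulVec_le hnonneg v
    _ ≤ μ := by simpa [habs] using hA.dotProduct_mulVec_le hμ |v|

end IsHermitian
end Matrix

namespace SimpleGraph

open Matrix

lemma deg_lt_card_of_adj_imp_mem {V : Type*} (G : SimpleGraph V) {v : V} {T : Finset V}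
    (hv : v ∈ T) (hT : ∀ w, G.Adj v w → w ∈ T) : deg G v < #T := by
  rw [deg, ← Set.ncard_coe_finset]
  exact Set.ncard_lt_ncard ⟨hT, fun h => G.irrefl (h (mem_coe.2 hv))⟩

lemma deg_top_between_of_mem_left {V : Type*} {X Y : Finset V} (hXY : Disjoint X Y) {u : V}
    (hu : u ∈ X) : deg ((⊤ : SimpleGraph V).between X Y) u = #Y := by
  rw [deg, ← Set.ncard_coe_finset]
  congr 1
  ext w
  have : u ∉ Y := Finset.disjoint_left.1 hXY hu
  simp only [mem_neighborSet, between_adj, top_adj, mem_coe]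
  constructor
  · rintro ⟨-, ⟨-, hw⟩ | ⟨hu', -⟩⟩
    exacts [hw, absurd hu' this]
  · exact fun hw => ⟨fun h => this (h ▸ hw), Or.inl ⟨hu, hw⟩⟩

variable {V : Type*} [Fintype V] [DecidableEq V] (G : SimpleGraph V)

lemma eigenvalues_adjMatrix_le_specRad [DecidableRel G.Adj] (i : V) :
    (G.isHermitian_adjMatrix ℝ).eigenvalues i ≤ specRad G := by
  rw [specRad, Subsingleton.elim (Classical.decRel G.Adj) ‹_›]
  exact le_csSup Matrix.finite_real_spectrum.bddAbove
    ((G.isHermitian_adjMatrix ℝ).eigenvalues_mem_spectrum_real i)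

lemma sum_sq_card_neighborFinset_inter_le [DecidableRel G.Adj] {μ : ℝ} (hμ : specRad G ≤ μ)
    (T U : Finset V) : ∑ v ∈ U, (#(G.neighborFinset v ∩ T) : ℝ) ^ 2 ≤ μ ^ 2 * #T := by
  have hA := G.isHermitian_adjMatrix ℝ
  have habs : ∀ i, |hA.eigenvalues i| ≤ μ :=
    hA.abs_eigenvalues_le (fun i j => by rw [adjMatrix_apply]; split_ifs <;> norm_num)
      fun i => (G.eigenvalues_adjMatrix_le_specRad i).trans hμ
  set x : V → ℝ := fun v => if v ∈ T then 1 else 0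
  have hx : x ⬝ᵥ x = #T := by simp [x, dotProduct]
  have hAx : ∀ v, (G.adjMatrix ℝ *ᵥ x) v = #(G.neighborFinset v ∩ T) := by
    simp [x, adjMatrix_mulVec_apply]
  calc ∑ v ∈ U, (#(G.neighborFinset v ∩ T) : ℝ) ^ 2
      ≤ ∑ v, (G.adjMatrix ℝ *ᵥ x) v ^ 2 := by
        simp_rw [hAx]
        exact sum_le_sum_of_subset_of_nonneg (subset_univ U) fun _ _ _ => sq_nonneg _
    _ = (G.adjMatrix ℝ *ᵥ x) ⬝ᵥ (G.adjMatrix ℝ *ᵥ x) := by simp [dotProduct, sq]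
    _ ≤ μ ^ 2 * #T := hx ▸ hA.mulVec_dotProduct_mulVec_le habs x

variable {G} in
lemma IsCompleteBetween.neighborFinset_inter_eq [DecidableRel G.Adj] {U T : Finset V}
    (h : G.IsCompleteBetween U T) {v : V} (hv : v ∈ U) : G.neighborFinset v ∩ T = T :=
  inter_eq_right.2 fun _ ht => (G.mem_neighborFinset _ _).2 (h hv ht)

lemma card_mul_card_le_sq_of_isCompleteBetween {μ : ℝ} (hμ : specRad G ≤ μ) {U T : Finset V}
    (h : G.IsCompleteBetween U T) : (#U * #T : ℝ) ≤ μ ^ 2 := by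
  classical
  obtain rfl | hT := T.eq_empty_or_nonempty
  · simpa using sq_nonneg μ
  have := G.sum_sq_card_neighborFinset_inter_le hμ T U
  rw [sum_congr rfl fun v hv => by rw [h.neighborFinset_inter_eq hv], sum_const,
    nsmul_eq_mul] at this
  have hT : (0 : ℝ) < #T := by exact_mod_cast hT.card_pos
  nlinarith

lemma not_adj_of_isCompleteBetween {U T : Finset V} (h : G.IsCompleteBetween U T)
    (hμ : specRad G ≤ √(#U * #T)) {w t : V} (hw : w ∉ U) (ht : t ∈ T) : ¬ G.Adj w t := by
  classical
  intro hwt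
  have hw1 : (1 : ℝ) ≤ #(G.neighborFinset w ∩ T) := by
    exact_mod_cast card_pos.2 ⟨t, mem_inter.2 ⟨(G.mem_neighborFinset w t).2 hwt, ht⟩⟩
  have := G.sum_sq_card_neighborFinset_inter_le hμ T (insert w U)
  rw [sum_insert hw, sum_congr rfl fun v hv => by rw [h.neighborFinset_inter_eq hv], sum_const,
    nsmul_eq_mul, Real.sq_sqrt (by positivity)] at this
  nlinarith

lemma adj_iff_of_isCompleteBetween {X Y : Finset V} (h : G.IsCompleteBetween X Y)
    (hμ : specRad G ≤ √(#X * #Y)) {a b : V} (ha : a ∈ X ∪ Y) :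
    G.Adj a b ↔ a ∈ X ∧ b ∈ Y ∨ a ∈ Y ∧ b ∈ X := by
  refine ⟨fun hab => ?_, ?_⟩
  · by_contra hcross
    rcases mem_union.1 ha with haX | haY
    · refine G.not_adj_of_isCompleteBetween h.symm (by rwa [mul_comm]) (w := b) ?_ haX hab.symm
      tauto
    · exact G.not_adj_of_isCompleteBetween h hμ (w := b) (by tauto) haY hab.symm
  · rintro (⟨haX, hbY⟩ | ⟨haY, hbX⟩)
    · exact h haX hbY
    · exact (h hbX haY).symm

structure IsSeparation (A B S : Finset V) : Prop where
  disjoint : Disjoint A B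
  disjoint_left : Disjoint A S
  disjoint_right : Disjoint B S
  union_eq_univ : A ∪ B ∪ S = univ
  left_nonempty : A.Nonempty
  right_nonempty : B.Nonempty
  not_adj : ∀ a ∈ A, ∀ b ∈ B, ¬ G.Adj a b

lemma exists_isSeparation_of_not_connected_induce_compl {S : Finset V} (hS : Sᶜ.Nonempty)
    (h : ¬ (G.induce (↑S : Set V)ᶜ).Connected) : ∃ A B : Finset V, G.IsSeparation A B S := by
  classical
  set H := G.induce (↑S : Set V)ᶜ
  have : Nonempty ((↑S : Set V)ᶜ : Set V) := by
    obtain ⟨v, hv⟩ := hS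
    exact ⟨⟨v, by simpa using hv⟩⟩
  obtain ⟨u, v, huv⟩ : ∃ u v, ¬ H.Reachable u v := by
    by_contra! hall
    exact h ((connected_iff _).2 ⟨hall, this⟩)
  set A := univ.filter fun w => ∃ hw : w ∉ S, H.Reachable u ⟨w, hw⟩
  have hA : ∀ w, w ∈ A ↔ ∃ hw : w ∉ S, H.Reachable u ⟨w, hw⟩ := by simp [A]
  have hB : ∀ w, w ∈ (A ∪ S)ᶜ ↔ w ∉ A ∧ w ∉ S := by simp
  refine ⟨A, (A ∪ S)ᶜ, ⟨?_, ?_, ?_, ?_, ⟨u, (hA u).2 ⟨u.2, .refl _⟩⟩, ⟨v, ?_⟩,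
    fun a ha b hb hab => ?_⟩⟩
  · exact Finset.disjoint_right.2 fun _ hw => ((hB _).1 hw).1
  · exact Finset.disjoint_left.2 fun _ hw => ((hA _).1 hw).1
  · exact Finset.disjoint_left.2 fun _ hw => ((hB _).1 hw).2
  · exact eq_univ_of_forall fun w => by simp only [mem_union, hB]; tauto
  · exact (hB v).2 ⟨fun hv => huv ((hA v).1 hv).2, v.2⟩
  · obtain ⟨_, hua⟩ := (hA a).1 ha
    obtain ⟨hbA, hbS⟩ := (hB b).1 hb
    exact hbA ((hA b).2 ⟨hbS, hua.trans (Adj.reachable (G := H) (v := ⟨b, hbS⟩) hab)⟩)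

lemma exists_isSeparation_of_not_sConnected {s : ℕ} (hs : s < Fintype.card V)
    (h : ¬ SConnected s G) : ∃ A B S : Finset V, #S < s ∧ G.IsSeparation A B S := by
  obtain ⟨S, hS, hdisc⟩ :
      ∃ S : Finset V, #S < s ∧ ¬ (G.induce (↑S : Set V)ᶜ).Connected := by
    simpa [SConnected, hs] using h
  have hSc : Sᶜ.Nonempty := by
    rw [← card_pos, card_compl]
    omega
  obtain ⟨A, B, hsep⟩ := G.exists_isSeparation_of_not_connected_induce_compl hSc hdisc
  exact ⟨A, B, S, hS, hsep⟩

namespace IsSeparation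

variable {G} {A B S : Finset V} (hsep : G.IsSeparation A B S)
include hsep

lemma symm : G.IsSeparation B A S where
  disjoint := hsep.disjoint.symm
  disjoint_left := hsep.disjoint_right
  disjoint_right := hsep.disjoint_left
  union_eq_univ := by rw [union_comm B, hsep.union_eq_univ]
  left_nonempty := hsep.right_nonempty
  right_nonempty := hsep.left_nonempty
  not_adj b hb a ha hba := hsep.not_adj a ha b hb hba.symm

lemma card_add_card_add_card : #A + #B + #S = Fintype.card V := by
  rw [← card_union_of_disjoint hsep.disjoint, ← card_union_of_disjoint
    (disjoint_union_left.2 ⟨hsep.disjoint_left, hsep.disjoint_right⟩), hsep.union_eq_univ,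
    card_univ]

lemma deg_lt {a : V} (ha : a ∈ A) : deg G a < #A + #S := by
  refine (G.deg_lt_card_of_adj_imp_mem (mem_union_left S ha) fun w haw => ?_).trans_le
    (card_union_le A S)
  have hw : w ∈ A ∪ B ∪ S := hsep.union_eq_univ ▸ mem_univ w
  simp only [mem_union] at hw ⊢
  exact hw.imp_left fun h => h.resolve_right fun hwB => hsep.not_adj a ha w hwB haw

lemma isCompleteBetween_compl : Gᶜ.IsCompleteBetween A B := fun a ha b hb =>
  ⟨fun h => Finset.disjoint_left.1 hsep.disjoint ha (h ▸ hb), hsep.not_adj a ha b hb⟩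

lemma memEC {n k s : ℕ} (hA : (#A : ℤ) = n - k - 1) (hB : (#B : ℤ) = k - s + 2)
    (hS : (#S : ℤ) = s - 1)
    (hμ : specRad Gᶜ ≤ √(((k : ℝ) - s + 2) * ((n : ℝ) - k - 1))) : MemEC n k s G := by
  have hμ' : specRad Gᶜ ≤ √(#A * #B) := by
    have hA' : (#A : ℝ) = n - k - 1 := by exact_mod_cast hA
    have hB' : (#B : ℝ) = k - s + 2 := by exact_mod_cast hB
    rwa [hA', hB', mul_comm]
  have hadj : ∀ a ∈ A ∪ B, ∀ b, a ≠ b →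
      (G.Adj a b ↔ ¬ (a ∈ A ∧ b ∈ B ∨ a ∈ B ∧ b ∈ A)) := by
    intro a ha b hab
    rw [← Gᶜ.adj_iff_of_isCompleteBetween hsep.isCompleteBetween_compl hμ' ha, compl_adj]
    tauto
  refine ⟨0, A, B, S, (⊤ : SimpleGraph V).between A B, hsep.disjoint, hsep.disjoint_left,
    hsep.disjoint_right, hsep.union_eq_univ, by simpa using hS, by push_cast; omega,
    fun u v huv => huv.2, fun u hu => ?_, fun v hv => ?_, fun a ha b hb => ?_, fun a ha b _ => ?_⟩
  · rw [deg_top_between_of_mem_left hsep.disjoint hu, hB]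
  · rw [between_comm, deg_top_between_of_mem_left hsep.disjoint.symm hv, hA]
  · have hbA : b ∉ A := Finset.disjoint_right.1 hsep.disjoint_left hb
    have hbB : b ∉ B := Finset.disjoint_right.1 hsep.disjoint_right hb
    refine (hadj a ha b ?_).2 (by tauto)
    rintro rfl
    exact (mem_union.1 ha).elim hbA hbB
  · by_cases hab : a = b
    · simp [hab]
    · simp [hadj a ha b hab, between_adj, hab]

end IsSeparation

end SimpleGraph

lemma separation_sizes_of_mul_le {a b t k s n : ℤ} (hsum : a + b + t = n) (ha : k < a + t)
    (hb : k < b + t) (ht : t < s) (hn : k + 2 ≤ n) (hab : a * b ≤ (k - s + 2) * (n - k - 1)) :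
    t = s - 1 ∧ (a = k - s + 2 ∨ b = k - s + 2) := by
  have hsplit : a * b = (k + 1 - t) * (n - k - 1) + (a - (k + 1 - t)) * (b - (k + 1 - t)) := by
    rw [← hsum]; ring
  have hrest : 0 ≤ (a - (k + 1 - t)) * (b - (k + 1 - t)) := mul_nonneg (by omega) (by omega)
  have hts : t = s - 1 := by
    by_contra hts
    nlinarith [mul_le_mul_of_nonneg_right (show k - s + 3 ≤ k + 1 - t by omega)
      (show 0 ≤ n - k - 1 by omega)]
  subst hts
  refine ⟨rfl, ?_⟩
  have : (a - (k - s + 2)) * (b - (k - s + 2)) = 0 := by nlinarith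
  rcases mul_eq_zero.1 this with h | h
  · exact Or.inl (by omega)
  · exact Or.inr (by omega)

theorem stmt_8_general {V : Type*} [Fintype V] [DecidableEq V] (n k s : ℕ) (G : SimpleGraph V)
    (hk : 1 ≤ k) (hks : (0 : ℤ) ≤ (k : ℤ) - s + 1) (hn : 2 * k + 1 ≤ n)
    (hcard : Fintype.card V = n) (hδ : ∀ v : V, k ≤ deg G v)
    (hμ : specRad Gᶜ ≤ Real.sqrt (((k : ℝ) - s + 2) * ((n : ℝ) - k - 1))) :
    SConnected s G ∨ MemEP n k G ∨ MemEC n k s G := by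
  refine or_iff_not_imp_left.2 fun hSC => Or.inr ?_
  obtain ⟨A, B, S, hS, hsep⟩ := G.exists_isSeparation_of_not_sConnected (by omega) hSC
  obtain ⟨a, ha⟩ := hsep.left_nonempty
  obtain ⟨b, hb⟩ := hsep.right_nonempty
  have hmul : (#A * #B : ℤ) ≤ (k - s + 2) * (n - k - 1) := by
    have hM : (0 : ℤ) ≤ ((k : ℤ) - s + 2) * ((n : ℤ) - k - 1) :=
      mul_nonneg (by omega) (by omega)
    have := Gᶜ.card_mul_card_le_sq_of_isCompleteBetween hμ hsep.isCompleteBetween_compl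
    rw [Real.sq_sqrt (by exact_mod_cast hM)] at this
    exact_mod_cast this
  have hsum : #A + #B + #S = n := hcard ▸ hsep.card_add_card_add_card
  have hA : k < #A + #S := (hδ a).trans_lt (hsep.deg_lt ha)
  have hB : k < #B + #S := (hδ b).trans_lt (hsep.symm.deg_lt hb)
  obtain ⟨hSs, hAsmall | hBsmall⟩ := separation_sizes_of_mul_le (t := #S)
    (by exact_mod_cast hsum) (by exact_mod_cast hA) (by exact_mod_cast hB) (by exact_mod_cast hS)
    (by omega) hmul
  · exact hsep.symm.memEC (by omega) hAsmall hSs hμ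
  · exact hsep.memEC (by omega) hBsmall hSs hμ

/-- Spectral condition of the complement for `s`-connectivity. -/
theorem stmt_8 {V : Type*} [Fintype V] [DecidableEq V] (n k s : ℕ) (G : SimpleGraph V)
    (hs : 1 ≤ s) (hk : 1 ≤ k) (hks : (0 : ℤ) ≤ (k : ℤ) - s + 1) (hn : 2 * k + 1 ≤ n)
    (hcard : Fintype.card V = n) (hconn : G.Connected) (hδ : ∀ v : V, k ≤ deg G v)
    (hμ : specRad Gᶜ ≤ Real.sqrt (((k : ℝ) - s + 2) * ((n : ℝ) - k - 1))) :
    SConnected s G ∨ MemEP n k G ∨ MemEC n k s G :=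
  stmt_8_general n k s G hk hks hn hcard hδ hμ
end

section
/- Let n, k, s be integers with n ≥ 2k+1 and k−s+1 ≥ 0, and let H be a graph of order n with minimum degree at least k such that every pair of nonadjacent vertices of H has degree sum at most n+s−3. Then for every edge uv of the complement H̄: k−s+2 ≤ d_{H̄}(u), d_{H̄}(v) ≤ n−k−1, d_{H̄}(u)+d_{H̄}(v) ≥ n−s+1, and d_{H̄}(u)·d_{H̄}(v) ≥ (k−s+2)(n−k−1), with equality in the product if and only if {d_{H̄}(u), d_{H̄}(v)} = {k−s+2, n−k−1}. -/
open Finset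

/-! Write `a, b` for the degrees of `u, v` in `Hᶜ`, `L = k - s + 2` and `U = n - k - 1`. The
minimum degree of `H` gives `a, b ≤ U`, and the degree-sum condition on the non-edge `uv` of `H`
gives `a + b ≥ L + U`, hence also `a, b ≥ L`. The product bound and its equality case come from
`a * b - L * U = (a - L) * (b - L) + L * (a + b - L - U)`, a sum of two nonnegative terms. -/

lemma deg_eq_degree {V : Type*} [Fintype V] (G : SimpleGraph V) [DecidableRel G.Adj] (v : V) :
    deg G v = G.degree v := by
  rw [deg, ← SimpleGraph.card_neighborSet_eq_degree, Set.ncard_eq_toFinset_card',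
    Set.toFinset_card]

lemma deg_compl_add_deg_add_one {V : Type*} [Fintype V] (G : SimpleGraph V) (v : V) :
    deg Gᶜ v + deg G v + 1 = Fintype.card V := by
  classical
  rw [deg_eq_degree, deg_eq_degree, SimpleGraph.degree_compl]
  have := G.degree_lt_card_verts v
  omega

lemma mul_sub_mul_eq_of_add {α : Type*} [CommRing α] (a b L U : α) :
    a * b - L * U = (a - L) * (b - L) + L * (a + b - (L + U)) := by
  ring

section ProductBound

variable {α : Type*} [CommRing α] [LinearOrder α] [IsStrictOrderedRing α] {a b L U : α}

lemma mul_le_mul_of_le_of_add_le (hL : 0 ≤ L) (ha : L ≤ a) (hb : L ≤ b) (hab : L + U ≤ a + b) :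
    L * U ≤ a * b := by
  have := mul_sub_mul_eq_of_add a b L U
  linarith [mul_nonneg (sub_nonneg.2 ha) (sub_nonneg.2 hb), mul_nonneg hL (sub_nonneg.2 hab)]

lemma mul_eq_mul_iff_of_le_of_add_le (hL : 0 < L) (ha : L ≤ a) (hb : L ≤ b)
    (hab : L + U ≤ a + b) : a * b = L * U ↔ (a = L ∧ b = U) ∨ (a = U ∧ b = L) := by
  constructor
  · intro heq
    have hprod := mul_nonneg (sub_nonneg.2 ha) (sub_nonneg.2 hb)
    have hsum := mul_nonneg hL.le (sub_nonneg.2 hab)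
    have hident := mul_sub_mul_eq_of_add a b L U
    have hprod0 : (a - L) * (b - L) = 0 := by linarith
    have hsum0 : a + b = L + U := by
      have : L * (a + b - (L + U)) = 0 := by linarith
      linarith [(mul_eq_zero.1 this).resolve_left hL.ne']
    rcases mul_eq_zero.1 hprod0 with h | h
    · left; constructor <;> linarith
    · right; constructor <;> linarith
  · rintro (⟨rfl, rfl⟩ | ⟨rfl, rfl⟩)
    · rfl
    · exact mul_comm _ _

end ProductBound

theorem stmt_18_general {V : Type*} [Fintype V] (n k s : ℕ) (H : SimpleGraph V)
    (hcard : Fintype.card V = n)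
    (hks : (0 : ℤ) ≤ (k : ℤ) - s + 1)
    (hδ : ∀ v : V, k ≤ deg H v)
    (hsum : ∀ u v : V, u ≠ v → ¬ H.Adj u v →
      (deg H u : ℤ) + deg H v ≤ (n : ℤ) + s - 3) :
    ∀ u v : V, Hᶜ.Adj u v →
      ((k : ℤ) - s + 2 ≤ (deg Hᶜ u : ℤ) ∧ (deg Hᶜ u : ℤ) ≤ (n : ℤ) - k - 1 ∧
       (k : ℤ) - s + 2 ≤ (deg Hᶜ v : ℤ) ∧ (deg Hᶜ v : ℤ) ≤ (n : ℤ) - k - 1 ∧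
       (n : ℤ) - s + 1 ≤ (deg Hᶜ u : ℤ) + deg Hᶜ v ∧
       ((k : ℤ) - s + 2) * ((n : ℤ) - k - 1) ≤ (deg Hᶜ u : ℤ) * deg Hᶜ v ∧
       ((deg Hᶜ u : ℤ) * deg Hᶜ v = ((k : ℤ) - s + 2) * ((n : ℤ) - k - 1) ↔
         ((deg Hᶜ u : ℤ) = (k : ℤ) - s + 2 ∧ (deg Hᶜ v : ℤ) = (n : ℤ) - k - 1) ∨
         ((deg Hᶜ u : ℤ) = (n : ℤ) - k - 1 ∧ (deg Hᶜ v : ℤ) = (k : ℤ) - s + 2))) := by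
  intro u v huv
  have hdu : (deg Hᶜ u : ℤ) + deg H u + 1 = n := by
    exact_mod_cast hcard ▸ deg_compl_add_deg_add_one H u
  have hdv : (deg Hᶜ v : ℤ) + deg H v + 1 = n := by
    exact_mod_cast hcard ▸ deg_compl_add_deg_add_one H v
  have hδu : (k : ℤ) ≤ deg H u := by exact_mod_cast hδ u
  have hδv : (k : ℤ) ≤ deg H v := by exact_mod_cast hδ v
  have hnonadj := hsum u v huv.ne huv.2
  have hab : (k : ℤ) - s + 2 + (n - k - 1) ≤ deg Hᶜ u + deg Hᶜ v := by linarith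
  have hau : (k : ℤ) - s + 2 ≤ deg Hᶜ u := by linarith
  have hbv : (k : ℤ) - s + 2 ≤ deg Hᶜ v := by linarith
  exact ⟨hau, by linarith, hbv, by linarith, by linarith,
    mul_le_mul_of_le_of_add_le (by linarith) hau hbv hab,
    mul_eq_mul_iff_of_le_of_add_le (by linarith) hau hbv hab⟩

/-- The key degree estimate on the complement used in the proof of the spectral
condition for `s`-connectivity. -/
theorem stmt_18 {V : Type*} [Fintype V] (n k s : ℕ) (H : SimpleGraph V)
    (hcard : Fintype.card V = n) (hn : 2 * k + 1 ≤ n)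
    (hks : (0 : ℤ) ≤ (k : ℤ) - s + 1)
    (hδ : ∀ v : V, k ≤ deg H v)
    (hsum : ∀ u v : V, u ≠ v → ¬ H.Adj u v →
      (deg H u : ℤ) + deg H v ≤ (n : ℤ) + s - 3) :
    ∀ u v : V, Hᶜ.Adj u v →
      ((k : ℤ) - s + 2 ≤ (deg Hᶜ u : ℤ) ∧ (deg Hᶜ u : ℤ) ≤ (n : ℤ) - k - 1 ∧
       (k : ℤ) - s + 2 ≤ (deg Hᶜ v : ℤ) ∧ (deg Hᶜ v : ℤ) ≤ (n : ℤ) - k - 1 ∧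
       (n : ℤ) - s + 1 ≤ (deg Hᶜ u : ℤ) + deg Hᶜ v ∧
       ((k : ℤ) - s + 2) * ((n : ℤ) - k - 1) ≤ (deg Hᶜ u : ℤ) * deg Hᶜ v ∧
       ((deg Hᶜ u : ℤ) * deg Hᶜ v = ((k : ℤ) - s + 2) * ((n : ℤ) - k - 1) ↔
         ((deg Hᶜ u : ℤ) = (k : ℤ) - s + 2 ∧ (deg Hᶜ v : ℤ) = (n : ℤ) - k - 1) ∨
         ((deg Hᶜ u : ℤ) = (n : ℤ) - k - 1 ∧ (deg Hᶜ v : ℤ) = (k : ℤ) - s + 2))) :=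
  stmt_18_general n k s H hcard hks hδ hsum
end
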